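/- arXiv:2108.01398 — 5 statements merged into one kernel-verified Lean document; each statement's English description precedes it below -/
import Mathlib

section
/- In the Baumslag–Solitar group H = BS(3,5) = ⟨c, d ∣ d⁻¹c³d = c⁵⟩, the commutator [d⁻¹cd, c] belongs to every finite-index subgroup of H. -/
/-!
In a finite quotient of `BS(m,n)` with `m, n` coprime, the image of `c` has some finite order `k`.
The conjugate elements `cᵐ` and `cⁿ` have the same order `k / gcd(k,m) = k / gcd(k,n)`, so
`gcd(k,m) = gcd(k,n)` divides `gcd(m,n) = 1`. Hence `c` is a power of `cᵐ`, and its conjugate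
`d⁻¹cd` is the same power of `cⁿ`, which commutes with `c`. Every finite-index subgroup contains
a normal one of finite index, so the commutator lies in it.
-/

/-- Relators of the Baumslag–Solitar group BS(n,m) = ⟨c, d ∣ d⁻¹cⁿd = cᵐ⟩,
with generator 0 ↦ c and 1 ↦ d. -/
def bsRels (n m : ℤ) : Set (FreeGroup (Fin 2)) :=
  {(FreeGroup.of 1)⁻¹ * (FreeGroup.of 0) ^ n * (FreeGroup.of 1) * (FreeGroup.of 0) ^ (-m)}

/-- The Baumslag–Solitar group BS(n,m). -/
abbrev BS (n m : ℤ) : Type := PresentedGroup (bsRels n m)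

theorem Nat.Coprime.coprime_of_gcd_eq_gcd {k m n : ℕ} (hmn : m.Coprime n)
    (h : k.gcd m = k.gcd n) : k.Coprime m :=
  Nat.eq_one_of_dvd_one (hmn ▸ Nat.dvd_gcd (Nat.gcd_dvd_right k m) (h ▸ Nat.gcd_dvd_right k n))

theorem IsOfFinOrder.coprime_of_orderOf_pow_eq {G : Type*} [Monoid G] {x : G}
    (hx : IsOfFinOrder x) {m n : ℕ} (hmn : m.Coprime n)
    (h : orderOf (x ^ m) = orderOf (x ^ n)) : (orderOf x).Coprime m := by
  rw [hx.orderOf_pow, hx.orderOf_pow] at h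
  have hk : orderOf x ≠ 0 := hx.orderOf_pos.ne'
  refine hmn.coprime_of_gcd_eq_gcd ?_
  rw [← Nat.div_div_self (Nat.gcd_dvd_left _ m) hk, h, Nat.div_div_self (Nat.gcd_dvd_left _ n) hk]

theorem commute_conj_of_conj_pow_eq_pow {G : Type*} [Group G] {c d : G}
    (hc : IsOfFinOrder c) {m n : ℕ} (hmn : m.Coprime n) (h : d⁻¹ * c ^ m * d = c ^ n) :
    Commute (d⁻¹ * c * d) c := by
  have hsemiconj : SemiconjBy d (c ^ n) (c ^ m) := by
    rw [SemiconjBy, ← h]; group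
  obtain ⟨a, ha⟩ := exists_pow_eq_self_of_coprime
    (hc.coprime_of_orderOf_pow_eq hmn hsemiconj.orderOf_eq.symm).symm
  have hconj : d⁻¹ * c * d = (c ^ n) ^ a := by
    have := conj_pow (a := d⁻¹) (b := c ^ m) (i := a)
    rw [inv_inv] at this
    rw [← h, this, ha]
  rw [hconj, ← pow_mul]
  exact (Commute.refl c).pow_left _

theorem commutator_conj_mem_of_finiteIndex {G : Type*} [Group G] {c d : G} {m n : ℕ}
    (hmn : m.Coprime n) (h : d⁻¹ * c ^ m * d = c ^ n) (K : Subgroup G) [K.FiniteIndex] :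
    (d⁻¹ * c * d)⁻¹ * c⁻¹ * (d⁻¹ * c * d) * c ∈ K := by
  let φ := QuotientGroup.mk' K.normalCore
  have hφ : Commute (φ (d⁻¹ * c * d)) (φ c) := by
    simp only [map_mul, map_inv]
    refine commute_conj_of_conj_pow_eq_pow (isOfFinOrder_of_finite _) hmn ?_
    simp only [← map_pow, ← map_inv, ← map_mul, h]
  have hker : φ ((d⁻¹ * c * d)⁻¹ * c⁻¹ * (d⁻¹ * c * d) * c) = 1 := by
    -- the word is `⁅x⁻¹, c⁻¹⁆` for `x = d⁻¹ * c * d`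
    simpa [commutatorElement_def] using commutatorElement_eq_one_iff_commute.mpr hφ.inv_inv
  exact K.normalCore_le ((QuotientGroup.eq_one_iff _).mp hker)

theorem BS.of_inv_mul_zpow_mul (m n : ℤ) :
    (PresentedGroup.of 1 : BS m n)⁻¹ * PresentedGroup.of 0 ^ m * PresentedGroup.of 1 =
      PresentedGroup.of 0 ^ n := by
  have hrel : (PresentedGroup.of 1 : BS m n)⁻¹ * PresentedGroup.of 0 ^ m * PresentedGroup.of 1 *
      PresentedGroup.of 0 ^ (-n) = 1 :=
    PresentedGroup.one_of_mem rfl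
  rwa [zpow_neg, mul_inv_eq_one] at hrel

theorem commutator_mem_of_finiteIndex
    (c d : BS 3 5) (hc : c = PresentedGroup.of 0) (hd : d = PresentedGroup.of 1)
    (K : Subgroup (BS 3 5)) (hK : K.FiniteIndex) :
    (d⁻¹ * c * d)⁻¹ * c⁻¹ * (d⁻¹ * c * d) * c ∈ K := by
  subst hc hd
  have hrel : (PresentedGroup.of 1 : BS 3 5)⁻¹ * PresentedGroup.of 0 ^ 3 * PresentedGroup.of 1 =
      PresentedGroup.of 0 ^ 5 := by
    exact_mod_cast BS.of_inv_mul_zpow_mul 3 5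
  exact commutator_conj_mem_of_finiteIndex (by norm_num) hrel K
end

section
/- For any homomorphism φ from BS(3,5) = ⟨c, d ∣ d⁻¹c³d = c⁵⟩ to a finite group K, the order of φ(c) is not divisible by 3, and consequently φ(c) lies in the cyclic subgroup generated by φ(c)³. -/
theorem Nat.Prime.not_dvd_of_div_gcd_eq {n p q : ℕ} (hp : p.Prime) (hq : q.Prime) (hpq : p ≠ q)
    (hn : n ≠ 0) (h : n / n.gcd q = n / n.gcd p) : ¬ p ∣ n := by
  intro hpn
  have hgcd : n.gcd q = p := by
    rw [← Nat.div_div_self (Nat.gcd_dvd_left n q) hn, h, Nat.gcd_eq_right hpn,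
      Nat.div_div_self hpn hn]
  exact hpq ((Nat.prime_dvd_prime_iff_eq hp hq).1 (hgcd ▸ Nat.gcd_dvd_right n q))

theorem not_dvd_orderOf_of_semiconjBy {G : Type*} [Group G] {x y : G} (hx : IsOfFinOrder x)
    {p q : ℕ} (hp : p.Prime) (hq : q.Prime) (hpq : p ≠ q) (h : SemiconjBy y (x ^ q) (x ^ p)) :
    ¬ p ∣ orderOf x := by
  refine hp.not_dvd_of_div_gcd_eq hq hpq hx.orderOf_pos.ne' ?_
  rw [← orderOf_pow' x hq.ne_zero, ← orderOf_pow' x hp.ne_zero]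
  exact h.orderOf_eq y

theorem mem_zpowers_pow_of_coprime {G : Type*} [Group G] {x : G} {n : ℕ}
    (h : n.Coprime (orderOf x)) : x ∈ Subgroup.zpowers (x ^ n) := by
  obtain ⟨m, hm⟩ := exists_pow_eq_self_of_coprime h
  exact ⟨m, by simpa only [zpow_natCast] using hm⟩

theorem BS.semiconjBy_of_one (n m : ℤ) :
    SemiconjBy (PresentedGroup.of 1 : BS n m) (PresentedGroup.of 0 ^ m) (PresentedGroup.of 0 ^ n) := by
  have hrel := PresentedGroup.one_of_mem (rels := bsRels n m) rfl
  simp only [map_mul, map_inv, map_zpow] at hrel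
  have hconj : (PresentedGroup.of 1 : BS n m)⁻¹ * PresentedGroup.of 0 ^ n * PresentedGroup.of 1 =
      PresentedGroup.of 0 ^ m := by
    rw [← mul_inv_eq_one, ← zpow_neg]
    exact hrel
  rw [SemiconjBy, ← hconj]
  group

theorem orderOf_image_c_not_dvd_three_general
    (c : BS 3 5) (hc : c = PresentedGroup.of 0)
    (K : Type) [Group K] [Finite K] (φ : BS 3 5 →* K) :
    ¬ (3 ∣ orderOf (φ c)) ∧ φ c ∈ Subgroup.zpowers ((φ c) ^ 3) := by
  have hsemi : SemiconjBy (φ (PresentedGroup.of 1)) (φ c ^ 5) (φ c ^ 3) := by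
    simpa [hc] using (BS.semiconjBy_of_one 3 5).map φ
  have hnot := not_dvd_orderOf_of_semiconjBy (isOfFinOrder_of_finite _)
    Nat.prime_three Nat.prime_five (by norm_num) hsemi
  exact ⟨hnot, mem_zpowers_pow_of_coprime (Nat.prime_three.coprime_iff_not_dvd.2 hnot)⟩

theorem orderOf_image_c_not_dvd_three
    (c d : BS 3 5) (hc : c = PresentedGroup.of 0) (hd : d = PresentedGroup.of 1)
    (K : Type) [Group K] [Finite K] (φ : BS 3 5 →* K) :
    ¬ (3 ∣ orderOf (φ c)) ∧ φ c ∈ Subgroup.zpowers ((φ c) ^ 3) :=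
  orderOf_image_c_not_dvd_three_general c hc K φ
end

section
/- For any homomorphism φ from BS(3,5) = ⟨c, d ∣ d⁻¹c³d = c⁵⟩ to a finite group K, the commutator [φ(d)⁻¹φ(c)φ(d), φ(c)] is trivial; i.e. [d⁻¹cd, c] lies in the kernel of every homomorphism from BS(3,5) to a finite group. -/
theorem BS.of_one_inv_mul_of_zero_zpow_mul_of_one (n m : ℤ) :
    (PresentedGroup.of 1 : BS n m)⁻¹ * PresentedGroup.of 0 ^ n * PresentedGroup.of 1 =
      PresentedGroup.of 0 ^ m := by
  rw [← mul_inv_eq_one, ← zpow_neg]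
  exact PresentedGroup.one_of_mem rfl

section ConjugatePowers

variable {G : Type*} [Group G] {x y : G} {n m : ℕ}

theorem IsOfFinOrder.gcd_orderOf_eq_of_conj_pow_eq_pow (hx : IsOfFinOrder x)
    (h : y⁻¹ * x ^ n * y = x ^ m) : (orderOf x).gcd n = (orderOf x).gcd m := by
  have hord : orderOf x / (orderOf x).gcd n = orderOf x / (orderOf x).gcd m := by
    rw [← hx.orderOf_pow, ← hx.orderOf_pow, ← h, ← MulAut.conj_symm_apply, MulEquiv.orderOf_eq]
  have ho : orderOf x ≠ 0 := hx.orderOf_pos.ne'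
  rw [← Nat.div_div_self (Nat.gcd_dvd_left _ n) ho, hord,
    Nat.div_div_self (Nat.gcd_dvd_left _ m) ho]

theorem IsOfFinOrder.coprime_orderOf_of_conj_pow_eq_pow (hx : IsOfFinOrder x)
    (hnm : n.Coprime m) (h : y⁻¹ * x ^ n * y = x ^ m) : n.Coprime (orderOf x) := by
  rw [Nat.coprime_comm, Nat.Coprime, ← Nat.dvd_one, ← hnm]
  exact Nat.dvd_gcd (Nat.gcd_dvd_right _ n)
    (hx.gcd_orderOf_eq_of_conj_pow_eq_pow h ▸ Nat.gcd_dvd_right _ m)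

theorem IsOfFinOrder.commute_conj_of_conj_pow_eq_pow (hx : IsOfFinOrder x)
    (hnm : n.Coprime m) (h : y⁻¹ * x ^ n * y = x ^ m) : Commute (y⁻¹ * x * y) x := by
  obtain ⟨k, hk⟩ := exists_pow_eq_self_of_coprime (hx.coprime_orderOf_of_conj_pow_eq_pow hnm h)
  have hconj : y⁻¹ * x * y = (x ^ m) ^ k :=
    calc y⁻¹ * x * y = y⁻¹ * (x ^ n) ^ k * y := by rw [hk]
      _ = (y⁻¹ * x ^ n * y) ^ k := by simpa using (conj_pow (a := y⁻¹) (b := x ^ n) (i := k)).symm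
      _ = (x ^ m) ^ k := by rw [h]
  rw [hconj]
  exact ((Commute.refl x).pow_left m).pow_left k

end ConjugatePowers

theorem commutator_in_kernel_of_finite
    (c d : BS 3 5) (hc : c = PresentedGroup.of 0) (hd : d = PresentedGroup.of 1)
    (K : Type) [Group K] [Finite K] (φ : BS 3 5 →* K) :
    ((φ d)⁻¹ * φ c * φ d)⁻¹ * (φ c)⁻¹ * ((φ d)⁻¹ * φ c * φ d) * φ c = 1 := by
  have hrel : (φ d)⁻¹ * φ c ^ 3 * φ d = φ c ^ 5 := by
    simpa [hc, hd] using congrArg φ (BS.of_one_inv_mul_of_zero_zpow_mul_of_one 3 5)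
  have hcomm := (isOfFinOrder_of_finite (φ c)).commute_conj_of_conj_pow_eq_pow
    (by norm_num) hrel
  simpa only [commutatorElement_def, inv_inv] using
    commutatorElement_eq_one_iff_commute.mpr hcomm.inv_inv
end

section
/- In any group, if x and y are elements of infinite order satisfying y⁻¹xy = x⁻¹, then the subgroup generated by x and y is isomorphic to the Klein-bottle group BS(1,−1) = ⟨a, b ∣ b⁻¹ab = a⁻¹⟩. -/
section KleinRelation

variable {H : Type*} [Group H] {a b : H}

theorem inv_mul_zpow_mul_eq_zpow_neg (hab : b⁻¹ * a * b = a⁻¹) (k : ℤ) :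
    b⁻¹ * a ^ k * b = a ^ (-k) := by
  simpa [hab] using (conj_zpow (a := b⁻¹) (b := a) (i := k)).symm

theorem exists_zpow_mul_zpow_eq_of_mem_closure (hab : b⁻¹ * a * b = a⁻¹) {g : H}
    (hg : g ∈ Subgroup.closure {a, b}) : ∃ i j : ℤ, a ^ i * b ^ j = g := by
  have hb_inv (i : ℤ) : b⁻¹ * a ^ i = a ^ (-i) * b⁻¹ := by
    rw [← inv_mul_zpow_mul_eq_zpow_neg hab]; group
  have hb (i : ℤ) : b * a ^ i = a ^ (-i) * b := by
    rw [← neg_neg i, ← inv_mul_zpow_mul_eq_zpow_neg hab (-i), neg_neg]; group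
  induction hg using Subgroup.closure_induction_left with
  | one => exact ⟨0, 0, by simp⟩
  | mul_left c hc g _ ih =>
    obtain ⟨i, j, rfl⟩ := ih
    rcases hc with rfl | rfl
    · exact ⟨i + 1, j, by group⟩
    · exact ⟨-i, 1 + j, by rw [zpow_one_add, ← mul_assoc, ← hb, mul_assoc]⟩
  | inv_mul_cancel c hc g _ ih =>
    obtain ⟨i, j, rfl⟩ := ih
    rcases hc with rfl | rfl
    · exact ⟨i - 1, j, by group⟩
    · exact ⟨-i, -1 + j, by rw [zpow_add, zpow_neg_one, ← mul_assoc, ← hb_inv, mul_assoc]⟩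

theorem eq_zero_of_zpow_mul_zpow_eq_one (hab : b⁻¹ * a * b = a⁻¹) (ha : ¬IsOfFinOrder a)
    (hb : ¬IsOfFinOrder b) {i j : ℤ} (h : a ^ i * b ^ j = 1) : i = 0 ∧ j = 0 := by
  have hbj : b ^ j = a ^ (-i) := by rw [zpow_neg]; exact eq_inv_of_mul_eq_one_right h
  have hai : a ^ (-i) = a ^ i :=
    calc a ^ (-i) = b⁻¹ * b ^ j * b := by rw [← hbj]; group
      _ = a ^ i := by rw [hbj, inv_mul_zpow_mul_eq_zpow_neg hab, neg_neg]
  have hi : i = 0 := by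
    have := injective_zpow_iff_not_isOfFinOrder.mpr ha hai
    omega
  subst hi
  refine ⟨rfl, injective_zpow_iff_not_isOfFinOrder.mpr hb ?_⟩
  simpa using hbj

end KleinRelation

namespace BS

variable {n m : ℤ}

theorem rel : ((PresentedGroup.of 1)⁻¹ * PresentedGroup.of 0 ^ n * PresentedGroup.of 1 :
    BS n m) = PresentedGroup.of 0 ^ m := by
  have := PresentedGroup.one_of_mem (rels := bsRels n m) rfl
  simp only [map_mul, map_inv, map_zpow, zpow_neg] at this
  exact mul_inv_eq_one.mp this

theorem closure_of :
    Subgroup.closure {PresentedGroup.of 0, PresentedGroup.of 1} = (⊤ : Subgroup (BS n m)) := by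
  rw [← PresentedGroup.closure_range_of]
  congr
  ext; simp [Fin.exists_fin_two, eq_comm]

variable {G : Type*} [Group G] (c d : G) (h : d⁻¹ * c ^ n * d = c ^ m)

def lift : BS n m →* G :=
  PresentedGroup.toGroup (f := ![c, d]) (by
    rintro r rfl
    simp [h, zpow_neg])

@[simp] theorem lift_of_zero : lift c d h (PresentedGroup.of 0) = c := PresentedGroup.toGroup.of _
@[simp] theorem lift_of_one : lift c d h (PresentedGroup.of 1) = d := PresentedGroup.toGroup.of _

theorem range_lift : (lift c d h).range = Subgroup.closure {c, d} := by
  rw [MonoidHom.range_eq_map, ← closure_of, MonoidHom.map_closure, Set.image_pair,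
    lift_of_zero, lift_of_one]

end BS

theorem closure_iso_klein_bottle
    (G : Type) [Group G] (x y : G)
    (hx : ¬ IsOfFinOrder x) (hy : ¬ IsOfFinOrder y)
    (hxy : y⁻¹ * x * y = x⁻¹) :
    Nonempty (↥(Subgroup.closure {x, y}) ≃* BS 1 (-1)) := by
  let φ := BS.lift (n := 1) (m := -1) x y (by simpa using hxy)
  have hφ : Function.Injective φ := by
    refine (injective_iff_map_eq_one φ).mpr fun g hg => ?_
    have hrel : (PresentedGroup.of 1 : BS 1 (-1))⁻¹ * PresentedGroup.of 0 * PresentedGroup.of 1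
        = (PresentedGroup.of 0)⁻¹ := by simpa using BS.rel (n := 1) (m := -1)
    obtain ⟨i, j, rfl⟩ := exists_zpow_mul_zpow_eq_of_mem_closure hrel
      (BS.closure_of ▸ Subgroup.mem_top g)
    obtain ⟨rfl, rfl⟩ := eq_zero_of_zpow_mul_zpow_eq_one hxy hx hy (by simpa [φ] using hg)
    simp
  exact ⟨((MonoidHom.ofInjective hφ).trans (MulEquiv.subgroupCongr (BS.range_lift ..))).symm⟩
end

section
/- In a free group, if α² lies in the cyclic subgroup ⟨β⟩ with α ≠ 1, then the subgroup ⟨α, β⟩ is cyclic; consequently, if β is not a square in the free group, then α ∈ ⟨β⟩. -/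
/-! The subgroup `H = ⟨x, y⟩` of the free group is free (Nielsen–Schreier). If it had two
distinct free generators, it would surject onto `ℤ²`, and `ℤ²` would be generated by the images
`u, v` of `x, y`; but `x ^ 2 = y ^ m` forces `2 • u = m • v`, so `det (u, v) = 0`, whereas a
generating pair of `ℤ²` has determinant `±1`. Hence `H` has at most one free generator and is
cyclic.

In particular `x` and `y` commute. For `m = 2 * j` torsion-freeness turns `x ^ 2 = (y ^ j) ^ 2`
into `x = y ^ j`; for `m = 2 * j + 1` we get `y = (x * y ^ (-j)) ^ 2`. -/

theorem closure_ofAdd_pair_ne_top_of_smul_eq_smul {u v : ℤ × ℤ} {k m : ℤ} (hk : k ≠ 0)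
    (h : k • u = m • v) :
    Subgroup.closure {Multiplicative.ofAdd u, Multiplicative.ofAdd v} ≠ ⊤ := by
  obtain ⟨a, b⟩ := u
  obtain ⟨c, d⟩ := v
  intro htop
  have hspan (x y : ℤ) : ∃ p q : ℤ, p * a + q * c = x ∧ p * b + q * d = y := by
    obtain ⟨p, q, hpq⟩ :=
      Subgroup.mem_closure_pair.mp (htop ▸ Subgroup.mem_top (Multiplicative.ofAdd (x, y)))
    exact ⟨p, q, by simpa [Prod.ext_iff] using congrArg Multiplicative.toAdd hpq⟩
  simp only [Prod.smul_mk, smul_eq_mul, Prod.mk.injEq] at h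
  obtain ⟨p, q, h1, h2⟩ := hspan 1 0
  obtain ⟨r, s, -, h4⟩ := hspan 0 1
  have hdet : a * d - b * c = 0 := mul_left_cancel₀ hk (by linear_combination d * h.1 - c * h.2)
  have : (p * s - q * r) * (a * d - b * c) = 1 := by
    linear_combination (r * b + s * d) * h1 + h4 - (r * a + s * c) * h2
  simp [hdet] at this

theorem not_surjective_prod_int_of_closure_pair_eq_top {G : Type*} [Group G] {a b : G} {k m : ℤ}
    (hgen : Subgroup.closure {a, b} = ⊤) (hk : k ≠ 0) (h : a ^ k = b ^ m)
    (φ : G →* Multiplicative (ℤ × ℤ)) : ¬ Function.Surjective φ := by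
  intro hφ
  refine closure_ofAdd_pair_ne_top_of_smul_eq_smul
    (u := (φ a).toAdd) (v := (φ b).toAdd) (m := m) hk ?_ ?_
  · rw [← toAdd_zpow, ← toAdd_zpow, ← map_zpow, ← map_zpow, h]
  · rw [ofAdd_toAdd, ofAdd_toAdd, ← Set.image_pair, ← MonoidHom.map_closure, hgen,
      ← MonoidHom.range_eq_map, MonoidHom.range_eq_top.mpr hφ]

namespace IsFreeGroup

variable {G : Type*} [Group G] [IsFreeGroup G]

theorem exists_surjective_prod_int {s t : Generators G} (hst : s ≠ t) :
    ∃ φ : G →* Multiplicative (ℤ × ℤ), Function.Surjective φ := by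
  classical
  refine ⟨lift fun u ↦ Multiplicative.ofAdd
    (if u = s then (1, 0) else if u = t then (0, 1) else 0), fun w ↦ ?_⟩
  refine ⟨of s ^ w.toAdd.1 * of t ^ w.toAdd.2, Multiplicative.toAdd.injective ?_⟩
  simp [lift_of, hst.symm]

theorem isCyclic_of_subsingleton_generators [Subsingleton (Generators G)] : IsCyclic G := by
  have : IsCyclic (FreeGroup (Generators G)) := by
    rcases isEmpty_or_nonempty (Generators G) with _ | ⟨⟨s⟩⟩
    · infer_instance
    · have := uniqueOfSubsingleton s
      infer_instance
  exact isCyclic_of_surjective (toFreeGroup G).symm (toFreeGroup G).symm.surjective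

theorem isCyclic_of_closure_pair_eq_top {a b : G} {k m : ℤ} (hgen : Subgroup.closure {a, b} = ⊤)
    (hk : k ≠ 0) (h : a ^ k = b ^ m) : IsCyclic G := by
  by_cases hsub : Subsingleton (Generators G)
  · exact isCyclic_of_subsingleton_generators
  · obtain ⟨s, t, hst⟩ := (not_subsingleton_iff_nontrivial.mp hsub).exists_pair_ne
    obtain ⟨φ, hφ⟩ := exists_surjective_prod_int hst
    exact absurd hφ (not_surjective_prod_int_of_closure_pair_eq_top hgen hk h φ)

theorem isCyclic_closure_pair_of_zpow_eq_zpow {a b : G} {k m : ℤ} (hk : k ≠ 0)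
    (h : a ^ k = b ^ m) :
    IsCyclic (Subgroup.closure {a, b}) := by
  let a' : Subgroup.closure {a, b} := ⟨a, Subgroup.subset_closure (by simp)⟩
  let b' : Subgroup.closure {a, b} := ⟨b, Subgroup.subset_closure (by simp)⟩
  refine isCyclic_of_closure_pair_eq_top (a := a') (b := b') ?_ hk (Subtype.ext h)
  rw [← Subgroup.closure_closure_coe_preimage]
  congr
  ext z
  simp [a', b', Subtype.ext_iff]

end IsFreeGroup

theorem mem_zpowers_of_sq_eq_zpow {G : Type*} [Group G] [IsMulTorsionFree G] {x y : G} {m : ℤ}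
    (hxy : Commute x y) (h : x ^ 2 = y ^ m) (hy : ¬ ∃ γ, y = γ ^ 2) :
    x ∈ Subgroup.zpowers y := by
  obtain ⟨j, rfl | rfl⟩ := m.even_or_odd'
  · exact ⟨j, (pow_left_inj two_ne_zero).mp (by rw [h]; group)⟩
  · refine absurd ⟨x * y ^ (-j), ?_⟩ hy
    rw [(hxy.zpow_right _).mul_pow, h]
    group

theorem free_group_square_in_cyclic_general
    (α : Type) (x y : FreeGroup α)
    (hxy : x ^ 2 ∈ Subgroup.zpowers y) :
    IsCyclic ↥(Subgroup.closure {x, y}) ∧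
      ((¬ ∃ γ : FreeGroup α, y = γ ^ 2) → x ∈ Subgroup.zpowers y) := by
  obtain ⟨m, hm⟩ := Subgroup.mem_zpowers_iff.mp hxy
  have hcyc : IsCyclic (Subgroup.closure {x, y}) :=
    IsFreeGroup.isCyclic_closure_pair_of_zpow_eq_zpow two_ne_zero (by exact_mod_cast hm.symm)
  have hcomm : Commute x y :=
    setLike_mul_comm (s := Subgroup.closure {x, y})
      (Subgroup.subset_closure (Set.mem_insert x {y}))
      (Subgroup.subset_closure (Set.mem_insert_of_mem x rfl))
  exact ⟨hcyc, mem_zpowers_of_sq_eq_zpow hcomm hm.symm⟩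

theorem free_group_square_in_cyclic
    (α : Type) (x y : FreeGroup α) (hx : x ≠ 1)
    (hxy : x ^ 2 ∈ Subgroup.zpowers y) :
    IsCyclic ↥(Subgroup.closure {x, y}) ∧
      ((¬ ∃ γ : FreeGroup α, y = γ ^ 2) → x ∈ Subgroup.zpowers y) :=
  free_group_square_in_cyclic_general α x y hxy
end
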